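/- arXiv:1506.03215 — 3 statements merged into one kernel-verified Lean document; each statement's English description precedes it below -/
import Mathlib

section
/- Let G be an edge-coloured graph that is rainbow connected, and let V₁, V₂, V₃ be a partition of V(G) such that every edge between distinct parts Vᵢ and Vⱼ has colour k. Then for any two distinct parts Vᵢ, Vⱼ, the induced edge-coloured subgraph G[Vᵢ ∪ Vⱼ] is rainbow connected. -/
/-- An edge-coloured graph is rainbow connected if any two vertices are joined by a
path whose edges receive pairwise distinct colours. -/
def RainbowConnected {V α : Type*} (G : SimpleGraph V) (c : Sym2 V → α) : Prop :=
  ∀ u v : V, ∃ p : G.Walk u v, p.IsPath ∧ (p.edges.map c).Nodup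

section LiftWalk
variable {V : Type*} {G : SimpleGraph V} {S : Set V}

def liftWalk : {u v : V} → (p : G.Walk u v) → (h : ∀ x ∈ p.support, x ∈ S) →
    (G.induce S).Walk ⟨u, h u p.start_mem_support⟩ ⟨v, h v p.end_mem_support⟩
  | _, _, SimpleGraph.Walk.nil, _ => SimpleGraph.Walk.nil
  | _, _, SimpleGraph.Walk.cons ha q, h =>
      SimpleGraph.Walk.cons (by exact ha)
        (liftWalk q (fun x hx => h x (by simp [hx])))

lemma liftWalk_support : {u v : V} → (p : G.Walk u v) → (h : ∀ x ∈ p.support, x ∈ S) →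
    (liftWalk p h).support.map Subtype.val = p.support
  | _, _, SimpleGraph.Walk.nil, _ => by simp [liftWalk]
  | _, _, SimpleGraph.Walk.cons ha q, h => by
      exact congrArg (List.cons _) (liftWalk_support q _)

lemma liftWalk_edges : {u v : V} → (p : G.Walk u v) → (h : ∀ x ∈ p.support, x ∈ S) →
    (liftWalk p h).edges.map (Sym2.map Subtype.val) = p.edges
  | _, _, SimpleGraph.Walk.nil, _ => by simp [liftWalk]
  | _, _, SimpleGraph.Walk.cons ha q, h => by
      exact congrArg₂ List.cons rfl (liftWalk_edges q _)

end LiftWalk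

theorem stmt_1 {V : Type*} (G : SimpleGraph V) (k : ℕ) (c : Sym2 V → ℕ)
    (P : Fin 3 → Set V)
    (hdisj : ∀ i j, i ≠ j → Disjoint (P i) (P j))
    (hcover : P 0 ∪ P 1 ∪ P 2 = Set.univ)
    (hRC : RainbowConnected G c)
    (hcross : ∀ i j, i ≠ j → ∀ u v, u ∈ P i → v ∈ P j → G.Adj u v → c s(u, v) = k) :
    ∀ i j, i ≠ j →
      RainbowConnected (G.induce (P i ∪ P j))
        (fun e => c (Sym2.map Subtype.val e)) := by
  classical
  intro i j hij u v
  set f : V → Fin 3 := fun x => if x ∈ P 0 then 0 else if x ∈ P 1 then 1 else 2 with hf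
  have hfmem : ∀ x, x ∈ P (f x) := by
    intro x
    by_cases h0 : x ∈ P 0
    · simpa [hf, h0] using h0
    by_cases h1 : x ∈ P 1
    · simpa [hf, h0, h1] using h1
    · have hx : x ∈ P 0 ∪ P 1 ∪ P 2 := hcover ▸ Set.mem_univ x
      have : x ∈ P 2 := by
        rcases hx with (h | h) | h <;> tauto
      simpa [hf, h0, h1] using this
  have hfuniq : ∀ x i', x ∈ P i' → f x = i' := by
    intro x i' hx
    by_contra hne
    exact Set.disjoint_left.mp (hdisj _ _ hne) (hfmem x) hx
  have crossK : ∀ a b : V, f a ≠ f b → G.Adj a b → c s(a, b) = k := fun a b hne hadj =>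
    hcross (f a) (f b) hne a b (hfmem a) (hfmem b) hadj
  -- Lemma B: a walk all of whose edges stay within one part has constant f on its support
  have hmono : ∀ (w z : V) (q : G.Walk w z),
      (∀ a b, s(a, b) ∈ q.edges → f a = f b) → ∀ x ∈ q.support, f x = f w := by
    intro w z q
    induction q with
    | nil =>
      intro _ x hx
      simp only [SimpleGraph.Walk.support_nil, List.mem_singleton] at hx
      subst hx; rfl
    | cons ha r ih =>
      intro h x hx
      rw [SimpleGraph.Walk.support_cons] at hx
      rcases List.mem_cons.mp hx with rfl | hx
      · rfl
      · have h1 := h _ _ (SimpleGraph.Walk.edges_cons ha r ▸ List.mem_cons_self)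
        rw [ih (fun a b hab => h a b (by simp [hab])) x hx, h1]
  -- Lemma A: on a rainbow walk, every support vertex is in the part of an endpoint
  have hA : ∀ (w z : V) (q : G.Walk w z), (q.edges.map c).Nodup →
      ∀ x ∈ q.support, f x = f w ∨ f x = f z := by
    intro w z q
    induction q with
    | nil =>
      intro _ x hx
      simp only [SimpleGraph.Walk.support_nil, List.mem_singleton] at hx
      subst hx; left; rfl
    | @cons a b z' ha r ih =>
      intro hnd x hx
      rw [SimpleGraph.Walk.edges_cons, List.map_cons, List.nodup_cons] at hnd
      obtain ⟨hnotin, hnd'⟩ := hnd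
      rw [SimpleGraph.Walk.support_cons] at hx
      by_cases hab : f a = f b
      · rcases List.mem_cons.mp hx with rfl | hx
        · left; rfl
        · rcases ih hnd' x hx with h | h
          · left; rw [h, hab]
          · right; exact h
      · have hk : c s(a, b) = k := crossK a b hab ha
        have hall : ∀ p q', s(p, q') ∈ r.edges → f p = f q' := by
          intro p q' hpq
          by_contra hne
          have hkk : c s(p, q') = k :=
            crossK p q' hne (SimpleGraph.Walk.adj_of_mem_edges r hpq)
          exact hnotin (hk ▸ hkk ▸ List.mem_map_of_mem (f := c) hpq)
        have hsup := hmono b z' r hall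
        rcases List.mem_cons.mp hx with rfl | hx
        · left; rfl
        · right
          rw [hsup x hx, ← hsup z' r.end_mem_support]
  -- f maps both endpoints into {i, j}
  have key : ∀ y : ↥(P i ∪ P j), ∀ x : V, f x = f y.val → x ∈ P i ∪ P j := by
    intro y x hx
    rcases y.2 with h | h
    · left; rw [← hfuniq y.val i h, ← hx]; exact hfmem x
    · right; rw [← hfuniq y.val j h, ← hx]; exact hfmem x
  obtain ⟨p, hp, hnd⟩ := hRC u.val v.val
  have hsub : ∀ x ∈ p.support, x ∈ P i ∪ P j := by
    intro x hx
    rcases hA _ _ p hnd x hx with h | h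
    · exact key u x h
    · exact key v x h
  refine ⟨liftWalk p hsub, ?_, ?_⟩
  · rw [SimpleGraph.Walk.isPath_def]
    have := liftWalk_support p hsub ▸ hp.support_nodup
    exact this.of_map _
  · have : ((liftWalk p hsub).edges.map (Sym2.map Subtype.val)).map c = p.edges.map c := by
      rw [liftWalk_edges p hsub]
    rw [List.map_map] at this
    simpa [Function.comp] using this ▸ hnd
end

section
/- Let G be an edge-coloured graph that is rainbow connected, and let V₁, V₂, V₃ be a nonempty tripartition of V(G) such that every edge between distinct parts has colour k. Then for any two distinct parts Vᵢ, Vⱼ, there is at least one edge of G between Vᵢ and Vⱼ. -/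
namespace SimpleGraph.Walk

variable {V ι α : Type*} {G : SimpleGraph V} {f : V → ι} {c : Sym2 V → α} {k : α}

theorem label_eq_of_color_notMem (hcross : ∀ u v, G.Adj u v → f u ≠ f v → c s(u, v) = k)
    {u v : V} (p : G.Walk u v) (hp : k ∉ p.edges.map c) : f u = f v := by
  induction p with
  | nil => rfl
  | cons hadj q ih =>
    rw [edges_cons, List.map_cons, List.mem_cons, not_or] at hp
    by_contra hne
    exact hp.1 (hcross _ _ hadj fun h => hne (h.trans (ih hp.2))).symm

theorem exists_adj_of_nodup_colors (hcross : ∀ u v, G.Adj u v → f u ≠ f v → c s(u, v) = k)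
    {u v : V} (p : G.Walk u v) (hp : (p.edges.map c).Nodup) (huv : f u ≠ f v) :
    ∃ a b, G.Adj a b ∧ f a = f u ∧ f b = f v := by
  induction p with
  | nil => exact absurd rfl huv
  | @cons u w v hadj q ih =>
    rw [edges_cons, List.map_cons, List.nodup_cons] at hp
    by_cases hw : f u = f w
    · obtain ⟨a, b, hab, ha, hb⟩ := ih hp.2 (hw ▸ huv)
      exact ⟨a, b, hab, ha.trans hw.symm, hb⟩
    · have hk : c s(u, w) = k := hcross u w hadj hw
      exact ⟨u, w, hadj, rfl, label_eq_of_color_notMem hcross q (hk ▸ hp.1)⟩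

end SimpleGraph.Walk

theorem stmt_2 {V : Type*} (G : SimpleGraph V) (k : ℕ) (c : Sym2 V → ℕ)
    (P : Fin 3 → Set V)
    (hne : ∀ i, (P i).Nonempty)
    (hdisj : ∀ i j, i ≠ j → Disjoint (P i) (P j))
    (hcover : P 0 ∪ P 1 ∪ P 2 = Set.univ)
    (hRC : RainbowConnected G c)
    (hcross : ∀ i j, i ≠ j → ∀ u v, u ∈ P i → v ∈ P j → G.Adj u v → c s(u, v) = k) :
    ∀ i j, i ≠ j → ∃ u ∈ P i, ∃ v ∈ P j, G.Adj u v := by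
  have hpart : ∀ v, ∃ i, v ∈ P i := by
    intro v
    rcases hcover.ge (Set.mem_univ v) with (h | h) | h
    exacts [⟨0, h⟩, ⟨1, h⟩, ⟨2, h⟩]
  choose f hf using hpart
  have hf_eq : ∀ v i, v ∈ P i → f v = i := fun v i hv => by
    by_contra h
    exact Set.disjoint_left.mp (hdisj _ _ h) (hf v) hv
  intro i j hij
  obtain ⟨x, hx⟩ := hne i
  obtain ⟨y, hy⟩ := hne j
  obtain ⟨p, -, hp⟩ := hRC x y
  obtain ⟨a, b, hab, ha, hb⟩ := p.exists_adj_of_nodup_colors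
    (fun u v huv hne => hcross _ _ hne u v (hf u) (hf v) huv) hp
    (by rwa [hf_eq x i hx, hf_eq y j hy])
  exact ⟨a, hf_eq x i hx ▸ ha ▸ hf a, b, hf_eq y j hy ▸ hb ▸ hf b, hab⟩
end

section
/- For all integers n, k with 3 ≤ k and 3 ≤ n, there exists a graph G on n vertices with exactly ⌈k(n-2)/(k-1)⌉ edges together with an edge-colouring using at most k colours that is rainbow connected. -/
open SimpleGraph

namespace SimpleGraph.Walk

variable {V α : Type*} {G : SimpleGraph V} {c : Sym2 V → α} {u v w : V}

def IsRainbow (p : G.Walk u v) (c : Sym2 V → α) : Prop := (p.edges.map c).Nodup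

lemma IsRainbow.reverse {p : G.Walk u v} (hp : p.IsRainbow c) : p.reverse.IsRainbow c := by
  rw [IsRainbow, edges_reverse, List.map_reverse, List.nodup_reverse]
  exact hp

lemma IsRainbow.append {p : G.Walk u v} {q : G.Walk v w} (hp : p.IsRainbow c)
    (hq : q.IsRainbow c) (hpq : ∀ e ∈ p.edges, ∀ e' ∈ q.edges, c e ≠ c e') :
    (p.append q).IsRainbow c := by
  rw [IsRainbow, edges_append, List.map_append, List.nodup_append]
  refine ⟨hp, hq, ?_⟩
  simp only [List.mem_map]
  rintro _ ⟨e, he, rfl⟩ _ ⟨e', he', rfl⟩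
  exact hpq e he e' he'

lemma IsRainbow.bypass [DecidableEq V] {p : G.Walk u v} (hp : p.IsRainbow c) :
    p.bypass.IsRainbow c :=
  p.bypass_isPath.isTrail.edges_nodup.map_on fun _ he _ he' =>
    List.inj_on_of_nodup_map hp (p.edges_bypass_subset_edges he)
      (p.edges_bypass_subset_edges he')

end SimpleGraph.Walk

open Walk

lemma exists_isRainbow_of_lt_of_le {V α : Type*} [LinearOrder α] {G : SimpleGraph V}
    {c : Sym2 V → α} {h x y : V} {p : G.Walk h x} {q : G.Walk h y} (hp : p.IsRainbow c)
    (hq : q.IsRainbow c) {m : α} (hpm : ∀ e ∈ p.edges, c e < m)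
    (hqm : ∀ e ∈ q.edges, m ≤ c e) : ∃ r : G.Walk x y, r.IsRainbow c :=
  ⟨p.reverse.append q, hp.reverse.append hq fun e he e' he' =>
    ((hpm e (by simpa using he)).trans_le (hqm e' he')).ne⟩

lemma exists_isRainbow_symm {V α : Type*} {G : SimpleGraph V} {c : Sym2 V → α} {u v : V} :
    (∃ p : G.Walk u v, p.IsRainbow c) → ∃ p : G.Walk v u, p.IsRainbow c
  | ⟨p, hp⟩ => ⟨p.reverse, hp.reverse⟩

lemma RainbowConnected.of_isRainbow {V α : Type*} {G : SimpleGraph V} {c : Sym2 V → α}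
    (h : ∀ u v, ∃ p : G.Walk u v, p.IsRainbow c) : RainbowConnected G c := by
  classical
  intro u v
  obtain ⟨p, hp⟩ := h u v
  exact ⟨p.bypass, p.bypass_isPath, hp.bypass⟩

lemma RainbowConnected.map_equiv {V W α : Type*} {G : SimpleGraph V} {c : Sym2 V → α}
    (h : RainbowConnected G c) (e : V ≃ W) :
    RainbowConnected (G.map e) (c ∘ Sym2.map e.symm) := by
  intro u v
  obtain ⟨p, hp, hc⟩ := h (e.symm u) (e.symm v)
  let φ := Iso.map e G
  refine ⟨(p.map φ.toHom).copy (by simp [φ]) (by simp [φ]), ?_, ?_⟩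
  · exact (isPath_copy _ _ _).2 (hp.map φ.injective)
  · rw [edges_copy, edges_map, List.map_map]
    convert hc using 2
    ext e'
    simp [φ, Sym2.map_map, Function.comp_def, Iso.map_apply]

lemma card_edgeSet_map_equiv {V W : Type*} (G : SimpleGraph V) (e : V ≃ W) :
    Nat.card (G.map e).edgeSet = Nat.card G.edgeSet :=
  Nat.card_congr (Iso.map e G).mapEdgeSet.symm

lemma card_edgeSet_fromEdgeSet_range {V ι : Type*} {f : ι → Sym2 V} (hf : f.Injective)
    (hd : ∀ i, ¬ (f i).IsDiag) : Nat.card (fromEdgeSet (Set.range f)).edgeSet = Nat.card ι := by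
  rw [edgeSet_fromEdgeSet, sdiff_eq_left.2, Nat.card_range_of_injective hf]
  exact Set.disjoint_left.2 fun _ ⟨i, hi⟩ => hi ▸ hd i

lemma ceil_succ_mul_div {K q s : ℕ} (hs : s < K) :
    ⌈((K : ℚ) + 1) * (q * K + s + 1) / K⌉ = q * (K + 1) + s + 2 := by
  have hK : (0 : ℚ) < K := by exact_mod_cast (by omega : 0 < K)
  have hsK : (s : ℚ) + 1 ≤ K := by exact_mod_cast hs
  rw [Int.ceil_eq_iff]
  push_cast
  constructor
  · rw [lt_div_iff₀ hK]; nlinarith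
  · rw [div_le_iff₀ hK]; nlinarith

namespace Flower

/-- `none` is the hub, `some (inl i)` the pendant vertex `i`, and `some (inr (j, p))` the
`p`-th inner vertex of petal `j`. -/
abbrev Vertex (K q t : ℕ) := Option (Fin t ⊕ Fin q × Fin K)

variable {K q t : ℕ}

/-- Position `i` along petal `j`; positions `0` and `K + 1` are both the hub. -/
def pos (j : Fin q) : ℕ → Vertex K q t
  | 0 => none
  | i + 1 => if h : i < K then some (.inr (j, ⟨i, h⟩)) else none

lemma pos_succ (j : Fin q) (p : Fin K) : pos (t := t) j (p + 1) = some (.inr (j, p)) :=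
  dif_pos p.isLt

lemma pos_last (j : Fin q) : pos (K := K) (t := t) j (K + 1) = none :=
  dif_neg (lt_irrefl K)

lemma pos_ne_pos_succ (hK : 1 ≤ K) (j : Fin q) {i : ℕ} (hi : i ≤ K) :
    pos (K := K) (t := t) j i ≠ pos j (i + 1) := by
  rcases i with _ | i <;> simp only [pos] <;> split_ifs <;> simp_all

def edge : Fin t ⊕ Fin q × Fin (K + 1) → Sym2 (Vertex K q t)
  | .inl i => s(none, some (.inl i))
  | .inr (j, i) => s(pos j i, pos j (i + 1))

def graph (K q t : ℕ) : SimpleGraph (Vertex K q t) := fromEdgeSet (Set.range edge)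

def edgeIndexAux : Vertex K q t → Vertex K q t → Option (Fin t ⊕ Fin q × Fin (K + 1))
  | none, some (.inl i) | some (.inl i), none => some (.inl i)
  | none, some (.inr (j, p)) | some (.inr (j, p)), none =>
      some (.inr (j, if p.val = 0 then 0 else Fin.last K))
  | some (.inr (j, p)), some (.inr (j', p')) =>
      if j = j' then some (.inr (j, ⟨min p p' + 1, by omega⟩)) else none
  | _, _ => none

lemma edgeIndexAux_comm (u v : Vertex K q t) : edgeIndexAux u v = edgeIndexAux v u := by
  rcases u with _ | _ | ⟨j, p⟩ <;> rcases v with _ | _ | ⟨j', p'⟩ <;> simp only [edgeIndexAux]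
  by_cases h : j = j' <;> simp [h, eq_comm, min_comm]

/-- A left inverse of `edge` (for `2 ≤ K`); its values off the edges carry no meaning. -/
def edgeIndex : Sym2 (Vertex K q t) → Option (Fin t ⊕ Fin q × Fin (K + 1)) :=
  Sym2.lift ⟨edgeIndexAux, edgeIndexAux_comm⟩

lemma edgeIndex_edge (hK : 2 ≤ K) (x : Fin t ⊕ Fin q × Fin (K + 1)) :
    edgeIndex (edge x) = some x := by
  rcases x with i | ⟨j, ⟨_ | i, hi⟩⟩
  · rfl
  · simp [edge, edgeIndex, pos, edgeIndexAux, show 0 < K by omega]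
  · have hiK : i < K := by omega
    by_cases h : i + 1 < K
    · simp [edge, edgeIndex, pos, edgeIndexAux, hiK, h]
    · simp [edge, edgeIndex, pos, edgeIndexAux, hiK, h, show i ≠ 0 by omega, Fin.ext_iff]
      omega

lemma edge_injective (hK : 2 ≤ K) : (edge (K := K) (q := q) (t := t)).Injective :=
  fun x y h => Option.some_injective _ <| by rw [← edgeIndex_edge hK, h, edgeIndex_edge hK]

lemma edge_not_isDiag (hK : 2 ≤ K) : ∀ x : Fin t ⊕ Fin q × Fin (K + 1), ¬ (edge x).IsDiag
  | .inl _ => by simp [edge]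
  | .inr (j, i) => by simpa [edge] using pos_ne_pos_succ (by omega) j i.is_le

lemma card_edgeSet_graph (hK : 2 ≤ K) : Nat.card (graph K q t).edgeSet = t + q * (K + 1) := by
  rw [graph, card_edgeSet_fromEdgeSet_range (edge_injective hK) (edge_not_isDiag hK)]
  simp

lemma adj_spoke (i : Fin t) : (graph K q t).Adj none (some (.inl i)) :=
  (fromEdgeSet_adj _).2 ⟨⟨.inl i, rfl⟩, by simp⟩

lemma adj_pos_succ (hK : 2 ≤ K) (j : Fin q) {i : ℕ} (hi : i ≤ K) :
    (graph K q t).Adj (pos j i) (pos j (i + 1)) :=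
  (fromEdgeSet_adj _).2 ⟨⟨.inr (j, ⟨i, by omega⟩), rfl⟩, pos_ne_pos_succ (by omega) j hi⟩

def colouring (ht : t ≤ K + 1) (e : Sym2 (Vertex K q t)) : Fin (K + 1) :=
  (edgeIndex e).elim 0 (Sum.elim (Fin.castLE ht) Prod.snd)

lemma colouring_spoke (ht : t ≤ K + 1) (i : Fin t) :
    colouring (q := q) ht s(none, some (.inl i)) = Fin.castLE ht i := rfl

lemma val_colouring_pos (hK : 2 ≤ K) (ht : t ≤ K + 1) (j : Fin q) {i : ℕ} (hi : i ≤ K) :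
    (colouring ht s(pos j i, pos j (i + 1))).val = i := by
  have := edgeIndex_edge (t := t) hK (.inr (j, ⟨i, by omega⟩))
  simp only [edge] at this
  simp [colouring, this]

section

variable (hK : 2 ≤ K) (ht : t ≤ K + 1)

def petalWalk (j : Fin q) (a : ℕ) : (d : ℕ) → a + d ≤ K + 1 →
    (graph K q t).Walk (pos j a) (pos j (a + d))
  | 0, _ => .nil
  | d + 1, h => (petalWalk j a d (by omega)).concat (adj_pos_succ hK j (i := a + d) (by omega))

lemma map_colouring_petalWalk (j : Fin q) (a : ℕ) :
    ∀ d (h : a + d ≤ K + 1),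
      (petalWalk hK j a d h).edges.map (fun e => (colouring ht e).val) = List.range' a d
  | 0, _ => rfl
  | d + 1, h => by
    rw [petalWalk, edges_concat, List.concat_eq_append, List.map_append,
      map_colouring_petalWalk j a d, List.range'_concat, List.map_singleton, one_mul]
    exact congrArg (List.range' a d ++ [·]) (val_colouring_pos hK ht j (by omega))

lemma isRainbow_petalWalk (j : Fin q) (a d : ℕ) (h : a + d ≤ K + 1) :
    (petalWalk hK j a d h).IsRainbow (colouring ht) := by
  apply List.Nodup.of_map Fin.val
  rw [List.map_map, Function.comp_def, map_colouring_petalWalk]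
  exact List.nodup_range'

lemma colouring_mem_petalWalk {j : Fin q} {a d : ℕ} {h : a + d ≤ K + 1}
    {e : Sym2 (Vertex K q t)} (he : e ∈ (petalWalk hK j a d h).edges) :
    a ≤ (colouring ht e).val ∧ (colouring ht e).val < a + d := by
  have := List.mem_map_of_mem (f := fun e => (colouring ht e).val) he
  rwa [map_colouring_petalWalk, List.mem_range'_1] at this

lemma isRainbow_spoke (i : Fin t) :
    (adj_spoke (K := K) (q := q) i).toWalk.IsRainbow (colouring ht) := by
  simp [IsRainbow]

def lowWalk (j : Fin q) (p : Fin K) : (graph K q t).Walk none (some (.inr (j, p))) :=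
  (petalWalk hK j 0 (p + 1) (by omega)).copy (by rw [pos]) (by rw [zero_add, pos_succ])

def highWalk (j : Fin q) (p : Fin K) : (graph K q t).Walk none (some (.inr (j, p))) :=
  (petalWalk hK j (p + 1) (K - p) (by omega)).reverse.copy
    (by rw [show (p : ℕ) + 1 + (K - p) = K + 1 by omega, pos_last]) (pos_succ j p)

lemma isRainbow_lowWalk (j : Fin q) (p : Fin K) : (lowWalk hK j p).IsRainbow (colouring ht) := by
  rw [lowWalk, IsRainbow, edges_copy]
  exact isRainbow_petalWalk hK ht j _ _ _

lemma isRainbow_highWalk (j : Fin q) (p : Fin K) :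
    (highWalk hK j p).IsRainbow (colouring ht) := by
  rw [highWalk, IsRainbow, edges_copy]
  exact (isRainbow_petalWalk hK ht j _ _ _).reverse

lemma colouring_lt_of_mem_lowWalk {j : Fin q} {p : Fin K} {e : Sym2 (Vertex K q t)}
    (he : e ∈ (lowWalk hK j p).edges) : colouring ht e < p.succ := by
  rw [lowWalk, edges_copy] at he
  simpa [Fin.lt_def] using (colouring_mem_petalWalk hK ht he).2

lemma le_colouring_of_mem_highWalk {j : Fin q} {p : Fin K} {e : Sym2 (Vertex K q t)}
    (he : e ∈ (highWalk hK j p).edges) : p.succ ≤ colouring ht e := by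
  rw [highWalk, edges_copy, edges_reverse, List.mem_reverse] at he
  simpa [Fin.le_def] using (colouring_mem_petalWalk hK ht he).1

end

lemma exists_isRainbow_pendant_pendant (ht : t ≤ K + 1) {i i' : Fin t} (h : i < i') :
    ∃ r : (graph K q t).Walk (some (.inl i)) (some (.inl i')), r.IsRainbow (colouring ht) :=
  exists_isRainbow_of_lt_of_le (isRainbow_spoke ht i) (isRainbow_spoke ht i')
    (m := Fin.castLE ht i') (by simpa [colouring_spoke] using h) (by simp [colouring_spoke])

lemma exists_isRainbow_pendant_petal (hK : 2 ≤ K) (ht : t ≤ K + 1) (i : Fin t) (j : Fin q)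
    (p : Fin K) :
    ∃ r : (graph K q t).Walk (some (.inl i)) (some (.inr (j, p))),
      r.IsRainbow (colouring ht) := by
  rcases lt_or_ge (Fin.castLE ht i) p.succ with h | h
  · exact exists_isRainbow_of_lt_of_le (isRainbow_spoke ht i) (isRainbow_highWalk hK ht j p)
      (by simpa [colouring_spoke] using h) fun _ => le_colouring_of_mem_highWalk hK ht
  · exact exists_isRainbow_symm <| exists_isRainbow_of_lt_of_le (isRainbow_lowWalk hK ht j p)
      (isRainbow_spoke ht i) (fun _ => colouring_lt_of_mem_lowWalk hK ht)
      (by simpa [colouring_spoke] using h)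

lemma exists_isRainbow_petal_petal (hK : 2 ≤ K) (ht : t ≤ K + 1) {j j' : Fin q}
    {p p' : Fin K} (h : p ≤ p') :
    ∃ r : (graph K q t).Walk (some (.inr (j, p))) (some (.inr (j', p'))),
      r.IsRainbow (colouring ht) :=
  exists_isRainbow_of_lt_of_le (isRainbow_lowWalk hK ht j p) (isRainbow_highWalk hK ht j' p')
    (fun _ => colouring_lt_of_mem_lowWalk hK ht)
    fun _ he => (Fin.succ_le_succ_iff.2 h).trans (le_colouring_of_mem_highWalk hK ht he)

theorem rainbowConnected (hK : 2 ≤ K) (ht : t ≤ K + 1) :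
    RainbowConnected (graph K q t) (colouring ht) := by
  refine .of_isRainbow fun u v => ?_
  rcases u with _ | i | ⟨j, p⟩ <;> rcases v with _ | i' | ⟨j', p'⟩
  · exact ⟨.nil, by simp [IsRainbow]⟩
  · exact ⟨_, isRainbow_spoke ht i'⟩
  · exact ⟨_, isRainbow_lowWalk hK ht j' p'⟩
  · exact ⟨_, (isRainbow_spoke ht i).reverse⟩
  · rcases lt_trichotomy i i' with h | rfl | h
    · exact exists_isRainbow_pendant_pendant ht h
    · exact ⟨.nil, by simp [IsRainbow]⟩
    · exact exists_isRainbow_symm (exists_isRainbow_pendant_pendant ht h)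
  · exact exists_isRainbow_pendant_petal hK ht i j' p'
  · exact ⟨_, (isRainbow_lowWalk hK ht j p).reverse⟩
  · exact exists_isRainbow_symm (exists_isRainbow_pendant_petal hK ht i' j p)
  · rcases le_total p p' with h | h
    · exact exists_isRainbow_petal_petal hK ht h
    · exact exists_isRainbow_symm (exists_isRainbow_petal_petal hK ht h)

end Flower

theorem stmt_7 (n k : ℕ) (hk : 3 ≤ k) (hn : 3 ≤ n) :
    ∃ G : SimpleGraph (Fin n),
      (Nat.card G.edgeSet : ℤ) = ⌈(k : ℚ) * (n - 2) / (k - 1)⌉ ∧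
      ∃ c : Sym2 (Fin n) → Fin k, RainbowConnected G c := by
  obtain ⟨K, rfl⟩ : ∃ K, k = K + 1 := ⟨k - 1, by omega⟩
  obtain ⟨q, s, hs, rfl⟩ : ∃ q s, s < K ∧ n = q * K + s + 3 :=
    ⟨(n - 3) / K, (n - 3) % K, Nat.mod_lt _ (by omega), by
      have := Nat.div_add_mod (n - 3) K; rw [Nat.mul_comm] at this; omega⟩
  have hK : 2 ≤ K := by omega
  have ht : s + 2 ≤ K + 1 := by omega
  have hcard : Fintype.card (Flower.Vertex K q (s + 2)) = q * K + s + 3 := by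
    simp [Flower.Vertex]; ring
  let e := (Fintype.equivFin _).trans (finCongr hcard)
  refine ⟨(Flower.graph K q (s + 2)).map e, ?_, _, (Flower.rainbowConnected hK ht).map_equiv e⟩
  rw [card_edgeSet_map_equiv, Flower.card_edgeSet_graph hK]
  convert (ceil_succ_mul_div (q := q) hs).symm using 2 <;> push_cast <;> ring
end
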